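/- Let p > 4, θ > 4, η ≥ 0, ρ > 0, C₄, C_p > 0 with ηC₄⁴ρ < 2, and suppose β > ((θ−2)(p−4)/((θ−4)(p−2)))^{(p−4)/2} · (1 − (η/2)C₄⁴ρ) / ((p−2)C_p^p ρ). Then (4/(2 − ηC₄⁴ρ)) · ((θ−2)/(θ−4)) · (1/2 − 1/(p−2)) · (1/(β(p−2)C_p^p ρ))^{2/(p−4)} · (1 − (η/2)C₄⁴ρ)^{(p−2)/(p−4)} < 1. -/

import Mathlib

/-! With `a = 1 - (η/2)C₄⁴ρ`, `D = (p-2)C_p^p ρ`, `L = (θ-2)(p-4)/((θ-4)(p-2))` and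
`s = (p-4)/2`, the left-hand side equals `L · (a/(βD))^(1/s) = (L^s · a/(βD))^(1/s)`, and the
hypothesis on `β` says exactly that `L^s · a / (βD) < 1`. -/

open Real

lemma mul_div_rpow_inv_lt_one {L s a x : ℝ} (hL : 0 < L) (hs : 0 < s) (ha : 0 ≤ a)
    (h : L ^ s * a < x) : L * (a / x) ^ s⁻¹ < 1 := by
  have hx : 0 < x := (mul_nonneg (rpow_nonneg hL.le s) ha).trans_lt h
  calc L * (a / x) ^ s⁻¹ = (L ^ s * (a / x)) ^ s⁻¹ := by
        rw [mul_rpow (rpow_nonneg hL.le s) (div_nonneg ha hx.le), rpow_rpow_inv hL.le hs.ne']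
    _ < 1 := by
        refine rpow_lt_one (by positivity) ?_ (inv_pos.mpr hs)
        rwa [← mul_div_assoc, div_lt_one hx]

lemma one_div_rpow_mul_rpow_one_add {a y : ℝ} (e : ℝ) (ha : 0 < a) (hy : 0 ≤ y) :
    (1 / y) ^ e * a ^ (1 + e) = a * (a / y) ^ e := by
  rw [rpow_add ha, rpow_one, div_rpow ha.le hy, div_rpow zero_le_one hy, one_rpow]
  ring

theorem stmt18_general (p θ η ρ C₄ Cp β : ℝ) (hp : 4 < p) (hθ : 4 < θ)
    (hρ : 0 < ρ) (hCp : 0 < Cp)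
    (hsm : η * C₄ ^ 4 * ρ < 2)
    (hβ : ((θ - 2) * (p - 4) / ((θ - 4) * (p - 2))) ^ ((p - 4) / 2)
        * (1 - η / 2 * C₄ ^ 4 * ρ) / ((p - 2) * Cp ^ p * ρ) < β) :
    4 / (2 - η * C₄ ^ 4 * ρ) * ((θ - 2) / (θ - 4)) * (1 / 2 - 1 / (p - 2))
      * (1 / (β * (p - 2) * Cp ^ p * ρ)) ^ ((2 : ℝ) / (p - 4))
      * (1 - η / 2 * C₄ ^ 4 * ρ) ^ ((p - 2) / (p - 4)) < 1 := by
  have hp4 : 0 < p - 4 := by linarith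
  have hp2 : 0 < p - 2 := by linarith
  have hθ4 : 0 < θ - 4 := by linarith
  have hθ2 : 0 < θ - 2 := by linarith
  set a := 1 - η / 2 * C₄ ^ 4 * ρ with ha_def
  set L := (θ - 2) * (p - 4) / ((θ - 4) * (p - 2)) with hL_def
  have ha : 0 < a := by linarith
  have hL : 0 < L := by positivity
  have hD : 0 < (p - 2) * Cp ^ p * ρ := by have := rpow_pos_of_pos hCp p; positivity
  have hβD : L ^ ((p - 4) / 2) * a < β * ((p - 2) * Cp ^ p * ρ) := by
    rwa [div_lt_iff₀ hD] at hβ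
  have hβD0 : 0 ≤ β * ((p - 2) * Cp ^ p * ρ) :=
    (mul_nonneg (rpow_nonneg hL.le _) ha.le).trans hβD.le
  have hfactor :
      4 / (2 - η * C₄ ^ 4 * ρ) * ((θ - 2) / (θ - 4)) * (1 / 2 - 1 / (p - 2)) = L / a := by
    have h2a : 2 - η * C₄ ^ 4 * ρ = 2 * a := by rw [ha_def]; ring
    rw [h2a, hL_def]
    field_simp
    ring
  have hpow : (1 / (β * (p - 2) * Cp ^ p * ρ)) ^ ((2 : ℝ) / (p - 4)) * a ^ ((p - 2) / (p - 4))
      = a * (a / (β * ((p - 2) * Cp ^ p * ρ))) ^ ((p - 4) / 2)⁻¹ := by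
    rw [show β * (p - 2) * Cp ^ p * ρ = β * ((p - 2) * Cp ^ p * ρ) by ring,
      show (p - 2) / (p - 4) = 1 + 2 / (p - 4) by field_simp; ring, inv_div]
    exact one_div_rpow_mul_rpow_one_add _ ha hβD0
  calc _ = L / a * (a * (a / (β * ((p - 2) * Cp ^ p * ρ))) ^ ((p - 4) / 2)⁻¹) := by
        rw [← hfactor, ← hpow]; ring
    _ = L * (a / (β * ((p - 2) * Cp ^ p * ρ))) ^ ((p - 4) / 2)⁻¹ := by field_simp
    _ < 1 := mul_div_rpow_inv_lt_one hL (by linarith) ha.le hβD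

/-- the key algebraic inequality of Lemma 3.7: if `ηC₄⁴ρ < 2` and
`β > ((θ−2)(p−4)/((θ−4)(p−2)))^((p−4)/2)·(1 − (η/2)C₄⁴ρ)/((p−2)C_p^p ρ)`, then
`(4/(2 − ηC₄⁴ρ))·((θ−2)/(θ−4))·(1/2 − 1/(p−2))·(1/(β(p−2)C_p^p ρ))^(2/(p−4))·
(1 − (η/2)C₄⁴ρ)^((p−2)/(p−4)) < 1`. -/
theorem stmt18 (p θ η ρ C₄ Cp β : ℝ) (hp : 4 < p) (hθ : 4 < θ) (hη : 0 ≤ η)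
    (hρ : 0 < ρ) (hC₄ : 0 < C₄) (hCp : 0 < Cp)
    (hsm : η * C₄ ^ 4 * ρ < 2)
    (hβ : ((θ - 2) * (p - 4) / ((θ - 4) * (p - 2))) ^ ((p - 4) / 2)
        * (1 - η / 2 * C₄ ^ 4 * ρ) / ((p - 2) * Cp ^ p * ρ) < β) :
    4 / (2 - η * C₄ ^ 4 * ρ) * ((θ - 2) / (θ - 4)) * (1 / 2 - 1 / (p - 2))
      * (1 / (β * (p - 2) * Cp ^ p * ρ)) ^ ((2 : ℝ) / (p - 4))
      * (1 - η / 2 * C₄ ^ 4 * ρ) ^ ((p - 2) / (p - 4)) < 1 :=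
  stmt18_general p θ η ρ C₄ Cp β hp hθ hρ hCp hsm hβ
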